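/- Let α ∈ (0, 1/2]. Then (j'_{1−α,1})² < 4 and (j'_{1+α,1})² < 8, where j'_{ν,1} is the first positive zero of the derivative J'_ν of the Bessel function J_ν. In particular the second and third magnetic Neumann eigenvalues of the Aharonov–Bohm operator on the unit disk satisfy λ₂^N(𝔻,α) < 4 and λ₃^N(𝔻,α) < 8. -/

import Mathlib

/-!
With `u = (x/2)^2` one has `J_ν'(x) = (x/2)^(ν-1) S_ν(u)`, where the entire series
`S_ν(u) = ∑ (-1)^n (n + ν/2) u^n / (n! Γ(ν+n+1))` satisfies `S_ν(0) > 0`. For `0 ≤ u ≤ 2` the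
moduli of its terms decrease from `n = 1` on, so the alternating series bound truncates it
after three terms: `4(ν+1)(ν+2)Γ(ν+1) S_ν(u) ≤ 2ν(ν+1)(ν+2) - 2(ν+2)^2 u + (4+ν)u^2`.
The right-hand side is negative at `(ν, u) = (1-α, 1)` and at `(1+α, 2)`, so `S_ν` has a zero
`u < 1`, resp. `u < 2`, and `j'_{ν,1}^2 ≤ 4u`.
-/

open Real

noncomputable def besselJ (ν x : ℝ) : ℝ :=
  ∑' n : ℕ, ((-1)^n / (n.factorial * Real.Gamma (ν + n + 1))) *
    (x / 2) ^ (2 * n) * (x / 2) ^ ν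

/-- `j'_{ν,1}`, the first positive zero of the derivative of `J_ν`. -/
noncomputable def besselJPrimeFirstZero (ν : ℝ) : ℝ :=
  sInf {x : ℝ | 0 < x ∧ deriv (besselJ ν) x = 0}

open scoped Nat

section PowerSeries

variable {a : ℕ → ℝ} {C B : ℝ}

theorem summable_mul_pow_of_abs_le_div_factorial (ha : ∀ n, |a n| ≤ C * B ^ n / n !) (y : ℝ) :
    Summable fun n => a n * y ^ n := by
  refine .of_norm_bounded ((Real.summable_pow_div_factorial (B * |y|)).mul_left C) fun n => ?_
  rw [norm_mul, norm_pow, Real.norm_eq_abs, Real.norm_eq_abs]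
  calc |a n| * |y| ^ n ≤ C * B ^ n / n ! * |y| ^ n := by gcongr; exact ha n
    _ = C * ((B * |y|) ^ n / n !) := by ring

theorem abs_natCast_mul_le_div_factorial (ha : ∀ n, |a n| ≤ C * B ^ n / n !)
    (n : ℕ) : |n * a n| ≤ C * (2 * B) ^ n / n ! := by
  have hn : (n : ℝ) ≤ 2 ^ n := by exact_mod_cast n.lt_two_pow_self.le
  rw [abs_mul, Nat.abs_cast]
  calc (n : ℝ) * |a n| ≤ 2 ^ n * (C * B ^ n / n !) := by gcongr; exact ha n
    _ = C * (2 * B) ^ n / n ! := by ring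

theorem hasDerivAt_tsum_mul_pow (hB : 0 ≤ B) (ha : ∀ n, |a n| ≤ C * B ^ n / n !) (y : ℝ) :
    HasDerivAt (fun z => ∑' n, a n * z ^ n) (∑' n, n * a n * y ^ (n - 1)) y := by
  set R := |y| + 1
  have hR : 1 ≤ R := le_add_of_nonneg_left (abs_nonneg y)
  refine hasDerivAt_tsum_of_isPreconnected (t := Metric.ball 0 R) (y₀ := y)
    (g' := fun n z => n * a n * z ^ (n - 1))
    (u := fun n => C * ((2 * B * R) ^ n / n !))
    ((Real.summable_pow_div_factorial _).mul_left C) Metric.isOpen_ball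
    (convex_ball 0 R).isPreconnected
    (fun n z _ => ((hasDerivAt_pow n z).const_mul (a n)).congr_deriv (by ring))
    (fun n z hz => ?_) (by simp [R]) (summable_mul_pow_of_abs_le_div_factorial ha y)
    (by simp [R])
  have hz : |z| ≤ R := by simpa using (Metric.mem_ball.1 hz).le
  have hC : 0 ≤ C := by simpa using (abs_nonneg _).trans (ha 0)
  rw [norm_mul, norm_pow, Real.norm_eq_abs, Real.norm_eq_abs]
  calc |n * a n| * |z| ^ (n - 1) ≤ C * (2 * B) ^ n / n ! * R ^ n := by
        gcongr
        · exact abs_natCast_mul_le_div_factorial ha n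
        · exact (pow_le_pow_left₀ (abs_nonneg z) hz _).trans
            (pow_le_pow_right₀ hR (n.sub_le 1))
    _ = C * ((2 * B * R) ^ n / n !) := by rw [mul_pow (2 * B)]; ring

theorem continuous_tsum_mul_pow (hB : 0 ≤ B) (ha : ∀ n, |a n| ≤ C * B ^ n / n !) :
    Continuous fun z => ∑' n, a n * z ^ n :=
  continuous_iff_continuousAt.2 fun y => (hasDerivAt_tsum_mul_pow hB ha y).continuousAt

end PowerSeries

theorem Gamma_le_Gamma_add_nat {s : ℝ} (hs : 1 ≤ s) (n : ℕ) : Gamma s ≤ Gamma (s + n) := by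
  induction n with
  | zero => simp
  | succ n ih =>
    have hΓ : 0 < Gamma (s + n) := Gamma_pos_of_pos (by positivity)
    rw [Nat.cast_succ, ← add_assoc, Real.Gamma_add_one (by positivity)]
    nlinarith

theorem tsum_neg_one_pow_mul_le_of_antitone_succ {b : ℕ → ℝ} (hs : Summable b)
    (hb : Antitone fun n => b (n + 1)) : ∑' n, (-1) ^ n * b n ≤ b 0 - b 1 + b 2 := by
  have htail := hb.alternating_series_le_tendsto
    ((summable_nat_add_iff 1).2 hs).tendsto_alternating_series_tsum 1
  have hshift : ∑' n, (-1) ^ (n + 1) * b (n + 1) = -∑' n, (-1) ^ n * b (n + 1) := by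
    rw [← tsum_neg]
    congr 1 with n
    ring
  rw [hs.alternating.tsum_eq_zero_add, hshift]
  simp only [Finset.sum_range_succ, Finset.sum_range_zero] at htail
  simp only [pow_zero, pow_one, one_mul, neg_one_mul, zero_add, Nat.reduceAdd] at htail ⊢
  linarith

noncomputable def besselCoeff (ν : ℝ) (n : ℕ) : ℝ := (-1) ^ n / (n ! * Gamma (ν + n + 1))

noncomputable def besselDerivSeries (ν u : ℝ) : ℝ :=
  ∑' n : ℕ, (n + ν / 2) * besselCoeff ν n * u ^ n

noncomputable def besselDerivTerm (ν u : ℝ) (n : ℕ) : ℝ :=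
  (n + ν / 2) * u ^ n / (n ! * Gamma (ν + n + 1))

section Bessel

variable {ν : ℝ}

theorem abs_besselCoeff_le (hν : 0 ≤ ν) (n : ℕ) :
    |besselCoeff ν n| ≤ (Gamma (ν + 1))⁻¹ * 1 ^ n / n ! := by
  have hΓ : 0 < Gamma (ν + 1) := Gamma_pos_of_pos (by positivity)
  rw [besselCoeff, abs_div, abs_pow, abs_neg, abs_one, one_pow,
    abs_of_pos (by positivity), mul_one, ← one_div, div_div, mul_comm (Gamma _)]
  gcongr
  simpa only [add_right_comm] using Gamma_le_Gamma_add_nat (s := ν + 1) (by linarith) n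

theorem besselJ_eq_rpow_mul_tsum (ν x : ℝ) :
    besselJ ν x = (x / 2) ^ ν * ∑' n, besselCoeff ν n * ((x / 2) ^ 2) ^ n := by
  rw [besselJ, mul_comm, ← tsum_mul_right]
  simp only [besselCoeff, ← pow_mul]

theorem besselDerivSeries_eq (hν : 0 ≤ ν) (u : ℝ) :
    besselDerivSeries ν u =
      ν / 2 * ∑' n, besselCoeff ν n * u ^ n + ∑' n, n * besselCoeff ν n * u ^ n := by
  have hc := abs_besselCoeff_le hν
  rw [besselDerivSeries, ← tsum_mul_left, ← Summable.tsum_add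
    ((summable_mul_pow_of_abs_le_div_factorial hc u).mul_left _)
    (summable_mul_pow_of_abs_le_div_factorial (abs_natCast_mul_le_div_factorial hc) u)]
  congr 1 with n
  ring

theorem continuous_besselDerivSeries (hν : 0 ≤ ν) : Continuous (besselDerivSeries ν) := by
  have hc := abs_besselCoeff_le hν
  rw [funext (besselDerivSeries_eq hν)]
  exact ((continuous_tsum_mul_pow zero_le_one hc).const_mul (ν / 2)).add
      (continuous_tsum_mul_pow (by norm_num) (abs_natCast_mul_le_div_factorial hc))

theorem hasDerivAt_besselJ (hν : 0 ≤ ν) {x : ℝ} (hx : 0 < x) :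
    HasDerivAt (besselJ ν) ((x / 2) ^ (ν - 1) * besselDerivSeries ν ((x / 2) ^ 2)) x := by
  have hc := abs_besselCoeff_le hν
  have hhalf : HasDerivAt (fun x : ℝ => x / 2) (1 / 2) x := (hasDerivAt_id x).div_const 2
  have hseries := (hasDerivAt_tsum_mul_pow zero_le_one hc ((x / 2) ^ 2)).comp x (hhalf.pow 2)
  have hrpow := hhalf.rpow_const (p := ν) (Or.inl (by positivity))
  have hmul_deriv (u : ℝ) : u * ∑' n, n * besselCoeff ν n * u ^ (n - 1) =
      ∑' n, n * besselCoeff ν n * u ^ n := by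
    rw [← tsum_mul_left]
    congr 1 with n
    rcases n with _ | n
    · simp
    · rw [pow_succ, Nat.add_sub_cancel]
      push_cast
      ring
  rw [funext (besselJ_eq_rpow_mul_tsum ν)]
  refine (hrpow.mul hseries).congr_deriv ?_
  simp only [Function.comp_apply, Pi.pow_apply]
  rw [besselDerivSeries_eq hν, ← hmul_deriv, rpow_sub_one (by positivity)]
  field_simp
  ring

theorem besselDerivTerm_succ_le (hν : 0 ≤ ν) {u : ℝ} (hu : 0 ≤ u) (hu2 : u ≤ 2) {n : ℕ}
    (hn : 1 ≤ n) : besselDerivTerm ν u (n + 1) ≤ besselDerivTerm ν u n := by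
  have hn' : (1 : ℝ) ≤ n := by exact_mod_cast hn
  have hΓ : 0 < Gamma (ν + n + 1) := Gamma_pos_of_pos (by positivity)
  have hsucc : besselDerivTerm ν u (n + 1) =
      (n + 1 + ν / 2) * u / ((n + 1) * (ν + n + 1)) * (u ^ n / (n ! * Gamma (ν + n + 1))) := by
    rw [besselDerivTerm, Nat.factorial_succ, Nat.cast_mul, Nat.cast_succ, ← add_assoc,
      Real.Gamma_add_one (by positivity), pow_succ]
    field_simp
  have hratio : (n + 1 + ν / 2) * u / ((n + 1) * (ν + n + 1)) ≤ n + ν / 2 := by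
    rw [div_le_iff₀ (by positivity)]
    have hfour : 4 ≤ (n + 1) * (ν + n + 1) := by nlinarith
    nlinarith [mul_le_mul_of_nonneg_left hu2 (by positivity : (0 : ℝ) ≤ n + 1 + ν / 2),
      mul_le_mul_of_nonneg_left hfour (by positivity : (0 : ℝ) ≤ n + ν / 2)]
  rw [hsucc, besselDerivTerm, mul_div_assoc _ (u ^ n)]
  gcongr

theorem besselDerivSeries_eq_tsum_neg_one_pow (ν u : ℝ) :
    besselDerivSeries ν u = ∑' n, (-1) ^ n * besselDerivTerm ν u n := by
  rw [besselDerivSeries]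
  congr 1 with n
  rw [besselCoeff, besselDerivTerm]
  ring

theorem summable_besselDerivTerm (hν : 0 ≤ ν) (u : ℝ) : Summable (besselDerivTerm ν u) := by
  have hc := abs_besselCoeff_le hν
  have hs := (((summable_mul_pow_of_abs_le_div_factorial
    (abs_natCast_mul_le_div_factorial hc) u).add
    ((summable_mul_pow_of_abs_le_div_factorial hc u).mul_left (ν / 2)))).alternating
  refine hs.congr fun n => ?_
  rw [besselCoeff, besselDerivTerm]
  calc _ = ((-1) ^ n * (-1) ^ n) * ((n + ν / 2) * u ^ n / (n ! * Gamma (ν + n + 1))) := by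
        ring
    _ = _ := by rw [← mul_pow]; norm_num

theorem besselDerivSeries_le (hν : 0 ≤ ν) {u : ℝ} (hu : 0 ≤ u) (hu2 : u ≤ 2) :
    besselDerivSeries ν u ≤
      (2 * ν * (ν + 1) * (ν + 2) - 2 * (ν + 2) ^ 2 * u + (4 + ν) * u ^ 2) /
        (4 * (ν + 1) * (ν + 2) * Gamma (ν + 1)) := by
  have hΓ : 0 < Gamma (ν + 1) := Gamma_pos_of_pos (by positivity)
  have hΓ₁ : Gamma (ν + 1 + 1) = (ν + 1) * Gamma (ν + 1) := Real.Gamma_add_one (by positivity)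
  have hΓ₂ : Gamma (ν + 2 + 1) = (ν + 2) * (ν + 1) * Gamma (ν + 1) := by
    rw [Real.Gamma_add_one (by positivity), show ν + 2 = ν + 1 + 1 by ring, hΓ₁]
    ring
  rw [besselDerivSeries_eq_tsum_neg_one_pow]
  refine (tsum_neg_one_pow_mul_le_of_antitone_succ (summable_besselDerivTerm hν u)
    (antitone_nat_of_succ_le fun n =>
      besselDerivTerm_succ_le hν hu hu2 (Nat.le_add_left 1 n))).trans_eq ?_
  simp only [besselDerivTerm, Nat.cast_zero, Nat.cast_one, Nat.cast_ofNat, Nat.factorial,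
    add_zero, zero_add, hΓ₁, hΓ₂]
  field_simp
  ring

theorem besselDerivSeries_neg (hν : 0 ≤ ν) {u : ℝ} (hu : 0 ≤ u) (hu2 : u ≤ 2)
    (hP : 2 * ν * (ν + 1) * (ν + 2) - 2 * (ν + 2) ^ 2 * u + (4 + ν) * u ^ 2 < 0) :
    besselDerivSeries ν u < 0 := by
  have hΓ : 0 < Gamma (ν + 1) := Gamma_pos_of_pos (by positivity)
  exact (besselDerivSeries_le hν hu hu2).trans_lt (div_neg_of_neg_of_pos hP (by positivity))

theorem besselDerivSeries_zero_pos (hν : 0 < ν) : 0 < besselDerivSeries ν 0 := by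
  rw [besselDerivSeries, tsum_eq_single 0 fun n hn => by simp [hn]]
  simp only [besselCoeff, CharP.cast_eq_zero, zero_add, pow_zero, Nat.factorial_zero,
    Nat.cast_one, one_mul, mul_one, add_zero]
  have hΓ : 0 < Gamma (ν + 1) := Gamma_pos_of_pos (by positivity)
  positivity

end Bessel

theorem besselJPrimeFirstZero_nonneg (ν : ℝ) : 0 ≤ besselJPrimeFirstZero ν :=
  Real.sInf_nonneg fun _ hx => hx.1.le

theorem besselJPrimeFirstZero_le {ν x : ℝ} (hx : 0 < x) (hderiv : deriv (besselJ ν) x = 0) :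
    besselJPrimeFirstZero ν ≤ x :=
  csInf_le ⟨0, fun _ hz => hz.1.le⟩ ⟨hx, hderiv⟩

theorem besselJPrimeFirstZero_sq_lt {ν u₀ : ℝ} (hν : 0 < ν) (hu₀ : 0 ≤ u₀)
    (hneg : besselDerivSeries ν u₀ < 0) : besselJPrimeFirstZero ν ^ 2 < 4 * u₀ := by
  obtain ⟨u, ⟨hu, huu₀⟩, hzero⟩ := intermediate_value_Ioo' hu₀
    (continuous_besselDerivSeries hν.le).continuousOn ⟨hneg, besselDerivSeries_zero_pos hν⟩
  set x := 2 * √u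
  have hx : 0 < x := by positivity
  have hxu : (x / 2) ^ 2 = u := by simp [x, Real.sq_sqrt hu.le]
  have hderiv : deriv (besselJ ν) x = 0 := by
    rw [(hasDerivAt_besselJ hν.le hx).deriv, hxu, hzero, mul_zero]
  calc besselJPrimeFirstZero ν ^ 2 ≤ x ^ 2 := by
        gcongr
        · exact besselJPrimeFirstZero_nonneg ν
        · exact besselJPrimeFirstZero_le hx hderiv
    _ = 4 * u := by rw [← hxu]; ring
    _ < 4 * u₀ := by linarith

theorem second_third_neumann_AB_eigenvalues (α : ℝ) (hα : α ∈ Set.Ioc (0:ℝ) (1/2)) :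
    (besselJPrimeFirstZero (1 - α))^2 < 4 ∧ (besselJPrimeFirstZero (1 + α))^2 < 8 := by
  obtain ⟨hα₀, hα₁⟩ := hα
  have hα_sq : α * α ≤ α * (1 / 2) := mul_le_mul_of_nonneg_left hα₁ hα₀.le
  constructor
  · have hneg : besselDerivSeries (1 - α) 1 < 0 :=
      besselDerivSeries_neg (by linarith) zero_le_one one_le_two
        (by nlinarith [pow_pos hα₀ 3])
    simpa using besselJPrimeFirstZero_sq_lt (by linarith) zero_le_one hneg
  · have hneg : besselDerivSeries (1 + α) 2 < 0 :=
      besselDerivSeries_neg (by linarith) zero_le_two le_rfl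
        (by nlinarith [mul_le_mul_of_nonneg_left hα_sq hα₀.le])
    simpa [show (4 : ℝ) * 2 = 8 by norm_num] using
      besselJPrimeFirstZero_sq_lt (by linarith) zero_le_two hneg
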